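/- arXiv:2204.12705 — 2 statements merged into one kernel-verified Lean document; each statement's English description precedes it below -/
import Mathlib

section
/- Let (M, M') be a matroid perspective on a finite totally ordered ground set E and let B be independent in M and spanning in M'. With X = (B \ Int_{M'}(B)) ∪ Ext_M(B), the set Ext_M(B) equals the lexicographically minimal basis B_min((M|X)*) of the dual of the restriction M|X. -/
open Matroid Set
open scoped Classical

variable {α : Type*}

/-- A circuit of a matroid: a minimal dependent set. -/
def Circ (M : Matroid α) (C : Set α) : Prop := Minimal M.Dep C

/-- Contraction of a set `X` in a matroid `M`, defined via duality and restriction. -/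
def mcon (M : Matroid α) (X : Set α) : Matroid α := (M✶ ↾ (M✶.E \ X))✶

/-- The rank of a matroid: the (common) cardinality of its bases. -/
noncomputable def rkN (M : Matroid α) : ℕ := sSup (Set.ncard '' {B | M.IsBase B})

/-- The rank of a set `X` in a matroid `M`. -/
noncomputable def rset (M : Matroid α) (X : Set α) : ℕ := rkN (M ↾ X)

/-- `e` is the minimal element of the set `C`. -/
def IsMinOf [LinearOrder α] (e : α) (C : Set α) : Prop := e ∈ C ∧ ∀ f ∈ C, e ≤ f

/-- `e` is externally active in `M` with respect to `X`. -/
def ExtAct [LinearOrder α] (M : Matroid α) (X : Set α) (e : α) : Prop :=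
  e ∈ M.E \ X ∧ ∃ C, Circ M C ∧ C ⊆ insert e X ∧ IsMinOf e C

/-- `e` is internally active in `M'` with respect to `X`. -/
def IntAct [LinearOrder α] (M' : Matroid α) (X : Set α) (e : α) : Prop :=
  e ∈ X ∧ ∃ C, Circ (M'✶) C ∧ C ⊆ insert e (M'.E \ X) ∧ IsMinOf e C

/-- The set `Ext_M(X)` of externally active elements. -/
def ExtSet [LinearOrder α] (M : Matroid α) (X : Set α) : Set α := {e | ExtAct M X e}

/-- The set `Int_{M'}(X)` of internally active elements. -/
def IntSet [LinearOrder α] (M' : Matroid α) (X : Set α) : Set α := {e | IntAct M' X e}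

/-- `Y` is `(M,<)`-compatible: no `M`-circuit `C` satisfies `Y ∩ C = {min C}`. -/
def Compat [LinearOrder α] (M : Matroid α) (Y : Set α) : Prop :=
  ¬ ∃ C e, Circ M C ∧ IsMinOf e C ∧ Y ∩ C = {e}

/-- `(M, M')` is a matroid perspective: same ground set, and every circuit of `M`
is a union of circuits of `M'` (equivalently, every point of an `M`-circuit `C` lies in
an `M'`-circuit contained in `C`). -/
def Perspective (M M' : Matroid α) : Prop :=
  M.E = M'.E ∧ ∀ C, Circ M C → ∀ x ∈ C, ∃ C', Circ M' C' ∧ C' ⊆ C ∧ x ∈ C'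

/-- `A` is lexicographically smaller than `B` (at the minimal element where they differ). -/
def LexLT [LinearOrder α] (A B : Set α) : Prop :=
  ∃ e, e ∈ A ∧ e ∉ B ∧ ∀ f, f < e → (f ∈ A ↔ f ∈ B)

/-- `B` is the lexicographically minimal basis of `M`. -/
def MinBasis [LinearOrder α] (M : Matroid α) (B : Set α) : Prop :=
  M.IsBase B ∧ ∀ B', M.IsBase B' → ¬ LexLT B' B

/-- The collection `D(M, M', <)` of compatible sets of a matroid perspective. -/
def DSet [LinearOrder α] (M M' : Matroid α) : Set (Set α) :=
  {X | X ⊆ M.E ∧ Compat (M'✶) X ∧ Compat M (M.E \ X)}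


section Aux

variable {M : Matroid α} {C D : Set α}

lemma Circ.dep {N : Matroid α} {C : Set α} (h : Circ N C) : N.Dep C := h.1

lemma Circ.diff_indep {N : Matroid α} {C : Set α} (h : Circ N C) {x : α} (hx : x ∈ C) :
    N.Indep (C \ {x}) := by
  by_contra h'
  have hd : N.Dep (C \ {x}) := ⟨h', diff_subset.trans h.1.subset_ground⟩
  exact ((h.2 hd diff_subset) hx).2 rfl

lemma exists_circ_subset [Fintype α] {N : Matroid α} {D : Set α} (hD : N.Dep D) :
    ∃ C, Circ N C ∧ C ⊆ D := by
  obtain ⟨C, hC⟩ := Set.Finite.exists_minimal (s := {C | N.Dep C ∧ C ⊆ D})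
    (Set.toFinite _) ⟨D, hD, Subset.rfl⟩
  exact ⟨C, ⟨hC.1.1, fun y hy hyC => hC.2 ⟨hy, hyC.trans hC.1.2⟩ hyC⟩, hC.1.2⟩

lemma circ_inter_cocirc {N : Matroid α} {C D : Set α} (hC : Circ N C) (hD : Circ N✶ D)
    {e : α} (h : C ∩ D = {e}) : False := by
  have heCD : e ∈ C ∩ D := h ▸ rfl
  have hDi : N✶.Indep (D \ {e}) := hD.diff_indep heCD.2
  have hsp : N.Spanning (N.E \ (D \ {e})) := Coindep.compl_spanning hDi
  have hCE : C ⊆ N.E := hC.dep.subset_ground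
  have hCS : C \ {e} ⊆ N.E \ (D \ {e}) := by
    rintro x ⟨hxC, hxe⟩
    exact ⟨hCE hxC, fun hxD => hxe (h ▸ ⟨hxC, hxD.1⟩ : x ∈ ({e} : Set α))⟩
  obtain ⟨J, hJ, hCJ⟩ := (hC.diff_indep heCD.1).subset_isBasis_of_subset hCS
  have hJbase : N.IsBase J := by
    refine hJ.indep.isBase_of_spanning ?_
    rw [spanning_iff_closure_eq hJ.indep.subset_ground]
    refine subset_antisymm (N.closure_subset_ground _) ?_
    calc N.E = N.closure (N.E \ (D \ {e})) := hsp.closure_eq.symm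
      _ ⊆ N.closure (N.closure J) := N.closure_subset_closure hJ.subset_closure
      _ = N.closure J := N.closure_closure J
  have heJ : e ∉ J := by
    intro heJ
    have : C ⊆ J := fun x hx => by
      rcases eq_or_ne x e with rfl | hne
      · exact heJ
      · exact hCJ ⟨hx, hne⟩
    exact hC.dep.1 (hJbase.indep.subset this)
  have hDsub : D ⊆ N.E \ J := by
    intro x hxD
    refine ⟨hD.dep.subset_ground hxD, fun hxJ => ?_⟩
    have := hJ.subset hxJ
    rcases eq_or_ne x e with rfl | hne
    · exact heJ hxJ
    · exact this.2 ⟨hxD, hne⟩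
  exact hD.dep.1 (hJbase.compl_isBase_dual.indep.subset hDsub)

lemma minBasis_of_cocirc [Fintype α] [LinearOrder α] {N : Matroid α} {B : Set α}
    (hB : N.IsBase B)
    (h : ∀ e ∈ B, ∃ D, Circ N✶ D ∧ D ⊆ insert e (N.E \ B) ∧ IsMinOf e D) :
    MinBasis N B := by
  refine ⟨hB, fun B' hB' ⟨e, heB', heB, hagree⟩ => ?_⟩
  have heE : e ∈ N.E := hB'.subset_ground heB'
  obtain ⟨C, hC, hCsub⟩ := exists_circ_subset (hB.insert_dep ⟨heE, heB⟩)
  have heC : e ∈ C := by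
    by_contra heC
    exact hC.dep.1 (hB.indep.subset fun x hx => ((hCsub hx).resolve_left (fun h => heC (h ▸ hx))))
  have hkey : C ⊆ B' := by
    intro f hfC
    rcases eq_or_ne f e with rfl | hfe
    · exact heB'
    have hfB : f ∈ B := (hCsub hfC).resolve_left hfe
    obtain ⟨D, hD, hDsub, hfD, hfmin⟩ := h f hfB
    have hsub : C ∩ D ⊆ {e, f} := by
      rintro x ⟨hxC, hxD⟩
      rcases hCsub hxC with rfl | hxB
      · exact Or.inl rfl
      rcases hDsub hxD with rfl | hxEB
      · exact Or.inr rfl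
      · exact absurd hxB hxEB.2
    have heD : e ∈ C ∩ D := by
      by_contra heD
      refine circ_inter_cocirc hC hD (e := f) (subset_antisymm ?_ ?_)
      · rintro x hx
        rcases hsub hx with rfl | rfl
        · exact absurd hx heD
        · rfl
      · rintro x rfl; exact ⟨hfC, hfD⟩
    have hfle : f < e := lt_of_le_of_ne (hfmin e heD.2) hfe
    exact (hagree f hfle).mpr hfB
  exact hC.dep.1 (hB'.indep.subset hkey)

lemma circ_restrict {M : Matroid α} {C X : Set α} (hC : Circ M C) (hCX : C ⊆ X) :
    Circ (M ↾ X) C := by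
  constructor
  · rw [restrict_dep_iff]; exact ⟨hC.dep.1, hCX⟩
  · intro y hy hyC
    rw [restrict_dep_iff] at hy
    exact hC.2 ⟨hy.1, hyC.trans hC.dep.subset_ground⟩ hyC

end Aux

/-- For `B` independent in `M` and spanning in `M'`, with
`X = (B \ Int_{M'}(B)) ∪ Ext_M(B)`, the set `Ext_M(B)` is the lexicographically
minimal basis of `(M|X)✶`. -/
theorem ext_eq_minBasis [Fintype α] [LinearOrder α] (M M' : Matroid α)
    (hP : Perspective M M') (B : Set α) (hBi : M.Indep B) (hBs : M'.Spanning B) :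
    MinBasis ((M ↾ ((B \ IntSet M' B) ∪ ExtSet M B))✶) (ExtSet M B) := by
  set Int := IntSet M' B with hInt
  set Ext := ExtSet M B with hExt
  set X := (B \ Int) ∪ Ext with hXdef
  have hdisj : ∀ e ∈ Ext, e ∉ B := fun e he => he.1.2
  have hXE : X ⊆ M.E :=
    union_subset (diff_subset.trans hBi.subset_ground) (fun e he => he.1.1)
  have claimA : ∀ e ∈ Ext, ∃ C, Circ M C ∧ IsMinOf e C ∧ C \ {e} ⊆ B \ Int := by
    rintro e ⟨heEB, C, hC, hCsub, hmin⟩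
    refine ⟨C, hC, hmin, ?_⟩
    rintro f ⟨hfC, hfe⟩
    have hfe' : f ≠ e := hfe
    have hfB : f ∈ B := by
      rcases hCsub hfC with rfl | h
      · exact absurd rfl hfe'
      · exact h
    refine ⟨hfB, fun hfInt => ?_⟩
    obtain ⟨-, D, hD, hDsub, hfmin⟩ := hfInt
    obtain ⟨C', hC', hC'sub, hfC'⟩ := hP.2 C hC f hfC
    have hsub : C' ∩ D ⊆ {e, f} := by
      rintro x ⟨hxC, hxD⟩
      rcases hCsub (hC'sub hxC) with rfl | hxB
      · exact Or.inl rfl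
      rcases hDsub hxD with rfl | hxEB
      · exact Or.inr rfl
      · exact absurd hxB hxEB.2
    have heD : e ∈ C' ∩ D := by
      by_contra heD
      refine circ_inter_cocirc hC' hD (e := f) (subset_antisymm ?_ ?_)
      · rintro x hx
        rcases hsub hx with rfl | rfl
        · exact absurd hx heD
        · rfl
      · rintro x rfl; exact ⟨hfC', hfmin.1⟩
    have h1 : f ≤ e := hfmin.2 e heD.2
    have h2 : e ≤ f := hmin.2 f hfC
    exact heEB.2 ((le_antisymm h2 h1) ▸ hfB)
  have hBIind : M.Indep (B \ Int) := hBi.subset diff_subset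
  have hbasis : M.IsBasis (B \ Int) X := by
    refine hBIind.isBasis_of_subset_of_subset_closure subset_union_left ?_
    rintro x (hx | hx)
    · exact M.subset_closure (B \ Int) (diff_subset.trans hBi.subset_ground) hx
    · obtain ⟨C, hC, hmin, hsub⟩ := claimA x hx
      have hCi : M.Indep (C \ {x}) := hC.diff_indep hmin.1
      have hx' : x ∈ M.closure (C \ {x}) := by
        rw [hCi.mem_closure_iff]
        left
        rw [insert_diff_singleton, insert_eq_of_mem hmin.1]
        exact hC.dep
      exact M.closure_subset_closure hsub hx'
  have hXdiff : X \ Ext = B \ Int := by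
    apply subset_antisymm
    · rintro x ⟨hx | hx, hxE⟩
      · exact hx
      · exact absurd hx hxE
    · rintro x hx
      exact ⟨Or.inl hx, fun hxE => (hdisj x hxE) hx.1⟩
  have hbase : ((M ↾ X)✶).IsBase Ext := by
    rw [dual_isBase_iff subset_union_right]
    have hg : (M ↾ X).E \ Ext = B \ Int := by
      rw [restrict_ground_eq]; exact hXdiff
    rw [hg]
    exact (isBase_restrict_iff hXE).2 hbasis
  refine minBasis_of_cocirc hbase ?_
  intro e he
  obtain ⟨C, hC, hmin, hsub⟩ := claimA e he
  have hCX : C ⊆ X := by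
    intro x hx
    rcases eq_or_ne x e with rfl | h
    · exact Or.inr he
    · exact Or.inl (hsub ⟨hx, h⟩)
  refine ⟨C, ?_, ?_, hmin⟩
  · rw [dual_dual]; exact circ_restrict hC hCX
  · have hg : ((M ↾ X)✶).E \ Ext = B \ Int := by
      rw [dual_ground, restrict_ground_eq]; exact hXdiff
    rw [hg]
    intro x hx
    rcases eq_or_ne x e with rfl | h
    · exact Or.inl rfl
    · exact Or.inr (hsub ⟨hx, h⟩)
end

section
/- Let (M, M') be a matroid perspective on a finite totally ordered ground set E. The map f(B) = (B \ Int_{M'}(B)) ∪ Ext_M(B) is a bijection from the collection of sets B ⊆ E that are independent in M and spanning in M' onto D(M, M', <), with inverse g(X) = (X \ B_min((M|X)*)) ∪ B_min(M'/X). -/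
open Matroid Set
open scoped Classical

variable {α : Type*}

section CircBasics
variable {M : Matroid α} {C D : Set α}

lemma Circ.dep_s9 (h : Circ M C) : M.Dep C := h.1

lemma Circ.subset_ground (h : Circ M C) : C ⊆ M.E := h.1.subset_ground

lemma Circ.diff_indep_s9 (h : Circ M C) {e : α} (he : e ∈ C) : M.Indep (C \ {e}) := by
  by_contra hdep
  have hd : M.Dep (C \ {e}) := ⟨hdep, (diff_subset).trans h.subset_ground⟩
  have := h.2 hd diff_subset
  exact (this he).2 rfl

lemma Circ.mem_closure (h : Circ M C) {e : α} (he : e ∈ C) : e ∈ M.closure (C \ {e}) := by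
  have hi := h.diff_indep_s9 he
  have : M.Dep (insert e (C \ {e})) := by
    rw [insert_diff_singleton, insert_eq_of_mem he]; exact h.dep_s9
  exact ((hi.insert_dep_iff).1 this).1

lemma exists_circ_of_dep [Fintype α] (hD : M.Dep D) : ∃ C, Circ M C ∧ C ⊆ D := by
  have hwf : WellFounded ((· ⊂ ·) : Set α → Set α → Prop) :=
    Finite.wellFounded_of_trans_of_irrefl _
  obtain ⟨C, ⟨hC, hCD⟩, hmin⟩ := hwf.has_min {C | M.Dep C ∧ C ⊆ D} ⟨D, hD, Subset.rfl⟩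
  refine ⟨C, ⟨hC, fun Y hY hYC => ?_⟩, hCD⟩
  by_contra hlt
  exact hmin Y ⟨hY, hYC.trans hCD⟩ (ssubset_of_subset_not_subset hYC hlt)

lemma exists_circ_insert [Fintype α] {I : Set α} {e : α} (hI : M.Indep I)
    (hd : M.Dep (insert e I)) : ∃ C, Circ M C ∧ e ∈ C ∧ C ⊆ insert e I := by
  obtain ⟨C, hC, hCsub⟩ := exists_circ_of_dep hd
  refine ⟨C, hC, ?_, hCsub⟩
  by_contra he
  exact hC.dep_s9.not_indep (hI.subset (fun x hx => ((hCsub hx).resolve_left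
    (fun h => he (h ▸ hx)))))

lemma circ_elim [Fintype α] {C₁ C₂ : Set α} {e f : α}
    (h₁ : Circ M C₁) (h₂ : Circ M C₂) (he₁ : e ∈ C₁) (he₂ : e ∉ C₂) (hf : f ∈ C₂) :
    ∃ C₃, Circ M C₃ ∧ e ∈ C₃ ∧ C₃ ⊆ (C₁ ∪ C₂) \ {f} := by
  have hef : e ≠ f := fun h => he₂ (h ▸ hf)
  set A := (C₁ ∪ C₂) \ {e, f} with hA
  have hAE : A ⊆ M.E := diff_subset.trans (union_subset h₁.subset_ground h₂.subset_ground)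
  have hC₂sub : C₂ \ {f} ⊆ A := by
    rintro y ⟨hy, hyf⟩
    exact ⟨Or.inr hy, by simp only [mem_insert_iff, mem_singleton_iff]
                         push_neg
                         exact ⟨fun h => he₂ (h ▸ hy), hyf⟩⟩
  have hfA : f ∈ M.closure A := M.closure_subset_closure hC₂sub (h₂.mem_closure hf)
  have hC₁sub : C₁ \ {e} ⊆ insert f A := by
    rintro y ⟨hy, hye⟩
    rcases eq_or_ne y f with rfl | hyf
    · exact mem_insert _ _
    · exact Or.inr ⟨Or.inl hy, by simp only [mem_insert_iff, mem_singleton_iff]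
                                  push_neg
                                  exact ⟨hye, hyf⟩⟩
  have heA : e ∈ M.closure A := by
    rw [← closure_insert_eq_of_mem_closure hfA]
    exact M.closure_subset_closure hC₁sub (h₁.mem_closure he₁)
  obtain ⟨J, hJ⟩ := M.exists_isBasis A hAE
  have heJ : e ∉ J := fun h => (hJ.subset h).2 (mem_insert _ _)
  have hdep : M.Dep (insert e J) := hJ.indep.insert_dep_iff.2
    ⟨by rw [hJ.closure_eq_closure]; exact heA, heJ⟩
  obtain ⟨C₃, hC₃, heC₃, hsub⟩ := exists_circ_insert hJ.indep hdep
  refine ⟨C₃, hC₃, heC₃, hsub.trans ?_⟩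
  rintro y (rfl | hy)
  · exact ⟨Or.inl he₁, hef⟩
  · have := hJ.subset hy
    exact ⟨this.1, fun h => this.2 (Or.inr h)⟩

lemma circ_cocirc {x : α} (hC : Circ M C) (hD : Circ M✶ D) (hCD : C ∩ D = {x}) : False := by
  have hx : x ∈ C ∩ D := hCD ▸ rfl
  have hCind := hC.diff_indep_s9 hx.1
  have hcoind : M.Coindep (D \ {x}) := hD.diff_indep_s9 hx.2
  have hsp : M.Spanning (M.E \ (D \ {x})) := hcoind.compl_spanning
  have hsub : C \ {x} ⊆ M.E \ (D \ {x}) := by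
    rintro y ⟨hyC, hyx⟩
    refine ⟨hC.subset_ground hyC, fun hyD => hyx ?_⟩
    have : y ∈ C ∩ D := ⟨hyC, hyD.1⟩
    rw [hCD] at this; exact this
  obtain ⟨I, hI, hCI⟩ := hCind.subset_isBasis_of_subset hsub diff_subset
  have hIbase : M.IsBase I := hI.indep.isBase_of_ground_subset_closure
    (by rw [hI.closure_eq_closure, hsp.closure_eq])
  have hxI : x ∉ I := by
    intro hxI
    refine hC.dep_s9.not_indep (hIbase.indep.subset ?_)
    intro y hy
    rcases eq_or_ne y x with rfl | hne
    · exact hxI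
    · exact hCI ⟨hy, hne⟩
  have hDsub : D ⊆ M.E \ I := by
    intro y hyD
    refine ⟨hD.subset_ground hyD, fun hyI => ?_⟩
    have := (hI.subset hyI).2
    rcases eq_or_ne y x with rfl | hne
    · exact hxI hyI
    · exact this ⟨hyD, hne⟩
  exact hD.dep_s9.not_indep ((hIbase.compl_isBase_dual).indep.subset hDsub)

/-- In circ_cocirc form giving a second intersection point. -/
lemma circ_cocirc_second {x : α} (hC : Circ M C) (hD : Circ M✶ D) (hx : x ∈ C ∩ D) :
    ∃ y, y ∈ C ∩ D ∧ y ≠ x := by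
  by_contra hno
  push_neg at hno
  exact circ_cocirc hC hD (Set.eq_singleton_iff_unique_mem.2 ⟨hx, fun y hy => hno y hy⟩)

end CircBasics
section Lex
variable [LinearOrder α]

lemma lexLT_irrefl (A : Set α) : ¬ LexLT A A := by
  rintro ⟨e, he, he', _⟩; exact he' he

lemma lexLT_asymm {A B : Set α} (h1 : LexLT A B) (h2 : LexLT B A) : False := by
  obtain ⟨e₁, he₁A, he₁B, hag₁⟩ := h1
  obtain ⟨e₂, he₂B, he₂A, hag₂⟩ := h2
  rcases lt_trichotomy e₁ e₂ with h | rfl | h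
  · exact he₁B ((hag₂ e₁ h).2 he₁A)
  · exact he₂A he₁A
  · exact he₂A ((hag₁ e₂ h).2 he₂B)

lemma lexLT_trans {A B C : Set α} (h1 : LexLT A B) (h2 : LexLT B C) : LexLT A C := by
  obtain ⟨e₁, he₁A, he₁B, hag₁⟩ := h1
  obtain ⟨e₂, he₂B, he₂C, hag₂⟩ := h2
  rcases lt_trichotomy e₁ e₂ with h | rfl | h
  · exact ⟨e₁, he₁A, fun hC => he₁B ((hag₂ e₁ h).2 hC),
      fun f hf => (hag₁ f hf).trans (hag₂ f (hf.trans h))⟩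
  · exact absurd he₂B he₁B
  · exact ⟨e₂, (hag₁ e₂ h).2 he₂B, he₂C,
      fun f hf => (hag₁ f (hf.trans h)).trans (hag₂ f hf)⟩

lemma lexLT_total [Fintype α] {A B : Set α} (h : A ≠ B) : LexLT A B ∨ LexLT B A := by
  set d := (A \ B) ∪ (B \ A) with hd
  have hdne : d.Nonempty := by
    by_contra hne
    push_neg at hne
    apply h
    ext x
    constructor
    · intro hx; by_contra hxB
      exact absurd (show x ∈ (∅ : Set α) from hne ▸ (Or.inl ⟨hx, hxB⟩ : x ∈ d)) (notMem_empty x)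
    · intro hx; by_contra hxA
      exact absurd (show x ∈ (∅ : Set α) from hne ▸ (Or.inr ⟨hx, hxA⟩ : x ∈ d)) (notMem_empty x)
  obtain ⟨m, hm, hmin⟩ := Set.exists_min_image d id d.toFinite hdne
  have hag : ∀ f, f < m → (f ∈ A ↔ f ∈ B) := by
    intro f hf
    constructor
    · intro hfA; by_contra hfB
      exact absurd hf (not_lt.2 (hmin f (Or.inl ⟨hfA, hfB⟩)))
    · intro hfB; by_contra hfA
      exact absurd hf (not_lt.2 (hmin f (Or.inr ⟨hfB, hfA⟩)))
  rcases hm with hm | hm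
  · exact Or.inl ⟨m, hm.1, hm.2, hag⟩
  · exact Or.inr ⟨m, hm.1, hm.2, fun f hf => (hag f hf).symm⟩

lemma exists_minBasis [Fintype α] (N : Matroid α) : ∃ B, MinBasis N B := by
  haveI : IsTrans (Set α) LexLT := ⟨fun _ _ _ => lexLT_trans⟩
  haveI : IsIrrefl (Set α) LexLT := ⟨lexLT_irrefl⟩
  have hwf : WellFounded (LexLT : Set α → Set α → Prop) :=
    Finite.wellFounded_of_trans_of_irrefl _
  obtain ⟨B, hB⟩ := N.exists_isBase
  obtain ⟨B₀, hB₀, hmin⟩ := hwf.has_min {B | N.IsBase B} ⟨B, hB⟩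
  exact ⟨B₀, hB₀, fun B' hB' => hmin B' hB'⟩

lemma minBasis_unique [Fintype α] {N : Matroid α} {B₁ B₂ : Set α}
    (h1 : MinBasis N B₁) (h2 : MinBasis N B₂) : B₁ = B₂ := by
  by_contra hne
  rcases lexLT_total hne with h | h
  · exact h2.2 B₁ h1.1 h
  · exact h1.2 B₂ h2.1 h

end Lex

section MinBasisCocirc
variable [LinearOrder α] {N : Matroid α} {B₀ : Set α}

lemma minBasis_of_cocircs [Fintype α] (hB : N.IsBase B₀)
    (h : ∀ b ∈ B₀, ∃ D, Circ N✶ D ∧ D ∩ B₀ = {b} ∧ IsMinOf b D) : MinBasis N B₀ := by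
  refine ⟨hB, fun A hA hlt => ?_⟩
  obtain ⟨e, heA, heB₀, hagree⟩ := hlt
  have heE : e ∈ N.E := hA.subset_ground heA
  have hdep : N.Dep (insert e B₀) := hB.indep.insert_dep_iff.2
    ⟨by rw [hB.closure_eq]; exact heE, heB₀⟩
  obtain ⟨C, hC, heC, hCsub⟩ := exists_circ_insert hB.indep hdep
  by_cases hcase : C \ {e} ⊆ A
  · exact hC.dep_s9.not_indep (hA.indep.subset
      (fun y hy => if hye : y = e then hye ▸ heA else hcase ⟨hy, hye⟩))
  · obtain ⟨b, ⟨hbC, hbe⟩, hbA⟩ := not_subset.1 hcase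
    have hbB₀ : b ∈ B₀ := (hCsub hbC).resolve_left hbe
    obtain ⟨D, hD, hDB, hmin⟩ := h b hbB₀
    have hbD : b ∈ D := by
      have : b ∈ D ∩ B₀ := hDB ▸ rfl
      exact this.1
    obtain ⟨y, hyCD, hyb⟩ := circ_cocirc_second hC hD ⟨hbC, hbD⟩
    have hye : y = e := by
      rcases hCsub hyCD.1 with h' | h'
      · exact h'
      · exfalso
        have : y ∈ D ∩ B₀ := ⟨hyCD.2, h'⟩
        rw [hDB] at this
        exact hyb this
    have hbe' : (b : α) < e := by
      have h1 : b ≤ e := hmin.2 e (hye ▸ hyCD.2)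
      exact lt_of_le_of_ne h1 (fun h' => heB₀ (h' ▸ hbB₀))
    exact hbA ((hagree b hbe').2 hbB₀)

lemma minBasis_cocircs [Fintype α] (h : MinBasis N B₀) {b : α} (hb : b ∈ B₀) :
    ∃ D, Circ N✶ D ∧ D ⊆ insert b (N.E \ B₀) ∧ IsMinOf b D := by
  have hB := h.1
  have hcompl : N✶.IsBase (N.E \ B₀) := hB.compl_isBase_dual
  have hbE : b ∈ N✶.E := hB.subset_ground hb
  have hbni : b ∉ N.E \ B₀ := fun h' => h'.2 hb
  have hdep : N✶.Dep (insert b (N.E \ B₀)) := hcompl.indep.insert_dep_iff.2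
    ⟨by rw [hcompl.closure_eq]; exact hbE, hbni⟩
  obtain ⟨D, hD, hbD, hDsub⟩ := exists_circ_insert hcompl.indep hdep
  refine ⟨D, hD, hDsub, hbD, fun f hf => ?_⟩
  by_contra hlt
  push_neg at hlt
  have hfb : f ≠ b := ne_of_lt hlt
  have hf' : f ∈ N.E \ B₀ := (hDsub hf).resolve_left hfb
  set K := (insert b (N.E \ B₀)) \ {f} with hK
  have hKE : K ⊆ N✶.E := by
    rintro y ⟨hy, -⟩
    rcases hy with rfl | hy
    · exact hbE
    · exact hy.1
  have hKind : N✶.Indep K := by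
    by_contra hKd
    obtain ⟨C', hC', hC'sub⟩ := exists_circ_of_dep ⟨hKd, hKE⟩
    have hbC' : b ∈ C' := by
      by_contra hbC'
      refine hC'.dep_s9.not_indep (hcompl.indep.subset ?_)
      intro y hy
      exact ((hC'sub hy).1.resolve_left (fun h' => hbC' (h' ▸ hy)))
    have hfC' : f ∉ C' := fun h' => (hC'sub h').2 rfl
    obtain ⟨C₄, hC₄, hfC₄, hC₄sub⟩ := circ_elim hD hC' hf hfC' hbC'
    refine hC₄.dep_s9.not_indep (hcompl.indep.subset ?_)
    intro y hy
    obtain ⟨hy1, hy2⟩ := hC₄sub hy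
    rcases hy1 with hy1 | hy1
    · exact (hDsub hy1).resolve_left hy2
    · exact ((hC'sub hy1).1.resolve_left hy2)
  have hKsp : N✶.Spanning K := by
    rw [spanning_iff_closure_eq hKE]
    have hfK : f ∈ N✶.closure K := by
      have hDK : D \ {f} ⊆ K := fun y hy => ⟨hDsub hy.1, hy.2⟩
      exact N✶.closure_subset_closure hDK (hD.mem_closure hf)
    have h1 : insert f K = insert b (N.E \ B₀) := by
      rw [hK, insert_diff_singleton, insert_eq_of_mem (mem_insert_of_mem _ hf')]
    have h2 : N✶.closure K = N✶.closure (insert f K) :=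
      (closure_insert_eq_of_mem_closure hfK).symm
    rw [h2, h1]
    have := hcompl.closure_eq
    apply subset_antisymm (closure_subset_ground _ _)
    rw [← this]
    exact N✶.closure_subset_closure (subset_insert _ _)
  have hKbase : N✶.IsBase K := hKsp.isBase_of_indep hKind
  have hNbase : N.IsBase (N.E \ K) := hKbase.compl_isBase_of_dual
  have hset : N.E \ K = insert f (B₀ \ {b}) := by
    ext x
    simp only [hK, mem_diff, mem_insert_iff, mem_singleton_iff]
    constructor
    · rintro ⟨hxE, hx⟩
      push_neg at hx
      by_cases hxf : x = f
      · exact Or.inl hxf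
      · refine Or.inr ⟨?_, fun hxb => hxf (hx (Or.inl hxb))⟩
        by_contra hxB₀
        exact hxf (hx (Or.inr ⟨hxE, hxB₀⟩))
    · rintro (rfl | ⟨hxB₀, hxb⟩)
      · exact ⟨hf'.1, fun h' => h'.2 rfl⟩
      · refine ⟨hB.subset_ground hxB₀, ?_⟩
        rintro ⟨(rfl | hx), -⟩
        · exact hxb rfl
        · exact hx.2 hxB₀
  rw [hset] at hNbase
  refine h.2 _ hNbase ⟨f, mem_insert _ _, hf'.2, fun g hg => ?_⟩
  have hgf : g ≠ f := ne_of_lt hg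
  have hgb : g ≠ b := ne_of_lt (hg.trans hlt)
  simp only [mem_insert_iff, mem_diff, mem_singleton_iff]
  constructor
  · rintro (rfl | ⟨h1, -⟩)
    · exact absurd rfl hgf
    · exact h1
  · intro h1
    exact Or.inr ⟨h1, hgb⟩

lemma base_inter_cocirc_nonempty {D : Set α} (hB : N.IsBase B₀) (hD : Circ N✶ D) :
    (D ∩ B₀).Nonempty := by
  by_contra hno
  push_neg at hno
  refine hD.dep_s9.not_indep (hB.compl_isBase_dual.indep.subset ?_)
  intro y hy
  refine ⟨hD.subset_ground hy, fun hyB => ?_⟩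
  have : y ∈ D ∩ B₀ := ⟨hy, hyB⟩
  rw [hno] at this
  exact this
end MinBasisCocirc
set_option linter.unusedSectionVars false

section RestrictCirc
variable {K : Matroid α} {Y C : Set α}

lemma restrict_circ_iff (hY : Y ⊆ K.E) : Circ (K ↾ Y) C ↔ Circ K C ∧ C ⊆ Y := by
  constructor
  · intro h
    have hCY : C ⊆ Y := h.dep_s9.subset_ground
    have hdep : K.Dep C := by
      have := (restrict_dep_iff.1 h.dep_s9).1
      exact ⟨this, hCY.trans hY⟩
    refine ⟨⟨hdep, fun D hD hDC => ?_⟩, hCY⟩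
    exact h.2 (restrict_dep_iff.2 ⟨hD.not_indep, hDC.trans hCY⟩) hDC
  · rintro ⟨h, hCY⟩
    refine ⟨restrict_dep_iff.2 ⟨h.dep_s9.not_indep, hCY⟩, fun D hD hDC => ?_⟩
    have : K.Dep D := ⟨(restrict_dep_iff.1 hD).1, (hDC.trans hCY).trans hY⟩
    exact h.2 this hDC

end RestrictCirc

section Persp
variable [Fintype α] [LinearOrder α] {M M' : Matroid α} {B C D : Set α} {b e : α}

/-- Sublemma 1 : an `M`-circuit with minimal element `e ∉ B` avoids internally
active elements of `B`. -/
lemma S1 (hP : Perspective M M') (hC : Circ M C) (hCsub : C ⊆ insert e B)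
    (hCmin : IsMinOf e C) (heB : e ∉ B) : ∀ b ∈ C, b ∉ IntSet M' B := by
  rintro b hbC ⟨hbB, D, hD, hDsub, hDmin⟩
  obtain ⟨C', hC', hC'sub, hbC'⟩ := hP.2 C hC b hbC
  obtain ⟨y, ⟨hyC', hyD⟩, hyb⟩ := circ_cocirc_second hC' hD ⟨hbC', hDmin.1⟩
  have hye : y = e := by
    rcases hDsub hyD with h | h
    · exact absurd h hyb
    · rcases hCsub (hC'sub hyC') with h' | h'
      · exact h'
      · exact absurd h' h.2
  have h1 : e ≤ b := hCmin.2 b hbC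
  have h2 : b ≤ e := hDmin.2 e (hye ▸ hyD)
  exact heB ((le_antisymm h1 h2) ▸ hbB)

/-- Sublemma 2 : an `M'`-cocircuit with minimal element `b ∈ B` avoids externally
active elements of `B`. -/
lemma S2 (hP : Perspective M M') (hD : Circ (M'✶) D) (hDsub : D ⊆ insert b (M'.E \ B))
    (hDmin : IsMinOf b D) (hbB : b ∈ B) : ∀ e ∈ D, e ∉ ExtSet M B := by
  rintro e heD ⟨heB, C, hC, hCsub, hCmin⟩
  obtain ⟨C', hC', hC'sub, heC'⟩ := hP.2 C hC e hCmin.1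
  obtain ⟨y, ⟨hyC', hyD⟩, hye⟩ := circ_cocirc_second hC' hD ⟨heC', heD⟩
  have hyb : y = b := by
    rcases hCsub (hC'sub hyC') with h | h
    · exact absurd h hye
    · rcases hDsub hyD with h' | h'
      · exact h'
      · exact absurd h (h'.2)
  have h1 : e ≤ b := hCmin.2 b (hyb ▸ (hC'sub hyC'))
  have h2 : b ≤ e := hDmin.2 e heD
  have : e ∈ M.E \ B := heB
  rw [hP.1] at this
  exact this.2 ((le_antisymm h2 h1) ▸ hbB)

end Persp

section Forward
variable [Fintype α] [LinearOrder α] {M M' : Matroid α} {B : Set α}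

lemma intSet_subset : IntSet M' B ⊆ B := fun _ he => he.1

lemma extSet_subset : ExtSet M B ⊆ M.E \ B := fun _ he => he.1

lemma fset_diff_B : (B \ IntSet M' B ∪ ExtSet M B) \ B = ExtSet M B := by
  ext x
  have h2 : x ∈ ExtSet M B → x ∈ M.E ∧ x ∉ B := fun h => extSet_subset h
  simp only [mem_union, mem_diff]
  tauto

lemma B_diff_fset : B \ (B \ IntSet M' B ∪ ExtSet M B) = IntSet M' B := by
  ext x
  have h1 : x ∈ IntSet M' B → x ∈ B := fun h => intSet_subset h
  have h2 : x ∈ ExtSet M B → x ∈ M.E ∧ x ∉ B := fun h => extSet_subset h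
  simp only [mem_union, mem_diff]
  tauto

lemma fset_diff_ext : (B \ IntSet M' B ∪ ExtSet M B) \ ExtSet M B = B \ IntSet M' B := by
  ext x
  have h2 : x ∈ ExtSet M B → x ∈ M.E ∧ x ∉ B := fun h => extSet_subset h
  simp only [mem_union, mem_diff]
  tauto

lemma fset_subset_ground (hB : B ⊆ M.E) : (B \ IntSet M' B ∪ ExtSet M B) ⊆ M.E := by
  rintro x (hx | hx)
  · exact hB hx.1
  · exact (extSet_subset hx).1

lemma ground_diff_fset (hB : B ⊆ M.E) :
    M.E \ (B \ IntSet M' B ∪ ExtSet M B) = ((M.E \ B) \ ExtSet M B) ∪ IntSet M' B := by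
  ext x
  have h1 : x ∈ IntSet M' B → x ∈ B := fun h => intSet_subset h
  have h2 : x ∈ ExtSet M B → x ∈ M.E ∧ x ∉ B := fun h => extSet_subset h
  have h3 : x ∈ B → x ∈ M.E := fun h => hB h
  simp only [mem_union, mem_diff]
  tauto

/-- The refined fundamental circuit of an externally active element. -/
lemma extCirc (hP : Perspective M M') {e : α} (he : e ∈ ExtSet M B) :
    ∃ C, Circ M C ∧ C ⊆ insert e (B \ IntSet M' B) ∧ IsMinOf e C ∧
      C ∩ ExtSet M B = {e} := by
  obtain ⟨heEB, C, hC, hCsub, hCmin⟩ := he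
  have hS1 := S1 hP hC hCsub hCmin heEB.2
  refine ⟨C, hC, ?_, hCmin, ?_⟩
  · intro y hy
    rcases hCsub hy with rfl | hyB
    · exact mem_insert _ _
    · exact Or.inr ⟨hyB, hS1 y hy⟩
  · apply Set.eq_singleton_iff_unique_mem.2
    refine ⟨⟨hCmin.1, ⟨heEB, C, hC, hCsub, hCmin⟩⟩, ?_⟩
    rintro y ⟨hyC, hyExt⟩
    rcases hCsub hyC with rfl | hyB
    · rfl
    · exact absurd hyB (extSet_subset hyExt).2

/-- The refined fundamental cocircuit of an internally active element. -/
lemma intCocirc (hP : Perspective M M') {b : α} (hb : b ∈ IntSet M' B) :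
    ∃ D, Circ (M'✶) D ∧ D ⊆ insert b ((M'.E \ B) \ ExtSet M B) ∧ IsMinOf b D ∧
      D ∩ IntSet M' B = {b} := by
  obtain ⟨hbB, D, hD, hDsub, hDmin⟩ := hb
  have hS2 := S2 hP hD hDsub hDmin hbB
  refine ⟨D, hD, ?_, hDmin, ?_⟩
  · intro y hy
    rcases hDsub hy with rfl | hyB
    · exact mem_insert _ _
    · exact Or.inr ⟨hyB, hS2 y hy⟩
  · apply Set.eq_singleton_iff_unique_mem.2
    refine ⟨⟨hDmin.1, ⟨hbB, D, hD, hDsub, hDmin⟩⟩, ?_⟩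
    rintro y ⟨hyD, hyInt⟩
    rcases hDsub hyD with rfl | hyB
    · rfl
    · exact absurd (intSet_subset hyInt) hyB.2

lemma baseX (hP : Perspective M M') (hInd : M.Indep B) :
    (M ↾ (B \ IntSet M' B ∪ ExtSet M B)).IsBase (B \ IntSet M' B) := by
  have hXE : (B \ IntSet M' B ∪ ExtSet M B) ⊆ M.E := fset_subset_ground hInd.subset_ground
  rw [isBase_restrict_iff hXE]
  refine (hInd.subset diff_subset).isBasis_of_subset_of_subset_closure subset_union_left ?_
  rintro x (hx | hx)
  · exact M.subset_closure _ (diff_subset.trans hInd.subset_ground) hx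
  · obtain ⟨C, hC, hCsub, hCmin, -⟩ := extCirc hP hx
    have hsub : C \ {x} ⊆ B \ IntSet M' B := by
      rintro y ⟨hyC, hyx⟩
      exact (hCsub hyC).resolve_left hyx
    exact M.closure_subset_closure hsub (hC.mem_closure hCmin.1)

lemma baseCompl (hP : Perspective M M') (hInd : M.Indep B) (hSp : M'.Spanning B) :
    (M'✶ ↾ (M.E \ (B \ IntSet M' B ∪ ExtSet M B))).IsBase ((M.E \ B) \ ExtSet M B) := by
  have hE := hP.1
  have hgr : M.E \ (B \ IntSet M' B ∪ ExtSet M B) ⊆ M'✶.E := by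
    rw [dual_ground, ← hE]; exact diff_subset
  rw [isBase_restrict_iff hgr]
  have hco : M'.Coindep (M'.E \ B) :=
    (spanning_iff_compl_coindep hSp.subset_ground).1 hSp
  have hind : M'✶.Indep ((M.E \ B) \ ExtSet M B) := by
    refine hco.indep.subset ?_
    rintro y ⟨⟨hy1, hy2⟩, -⟩
    exact ⟨hE ▸ hy1, hy2⟩
  refine hind.isBasis_of_subset_of_subset_closure ?_ ?_
  · rw [ground_diff_fset hInd.subset_ground]
    exact subset_union_left
  · rw [ground_diff_fset hInd.subset_ground]
    rintro x (hx | hx)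
    · refine M'✶.subset_closure _ ?_ hx
      rintro y ⟨⟨hy1, hy2⟩, -⟩
      rw [dual_ground, ← hE]; exact hy1
    · obtain ⟨D, hD, hDsub, hDmin, -⟩ := intCocirc hP hx
      have hsub : D \ {x} ⊆ (M.E \ B) \ ExtSet M B := by
        rintro y ⟨hyD, hyx⟩
        obtain ⟨⟨h1, h2⟩, h3⟩ := (hDsub hyD).resolve_left hyx
        exact ⟨⟨hE ▸ h1, h2⟩, h3⟩
      exact M'✶.closure_subset_closure hsub (hD.mem_closure hDmin.1)

lemma minExt (hP : Perspective M M') (hInd : M.Indep B) :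
    MinBasis ((M ↾ (B \ IntSet M' B ∪ ExtSet M B))✶) (ExtSet M B) := by
  set X := B \ IntSet M' B ∪ ExtSet M B with hX
  have hbase : ((M ↾ X)✶).IsBase (ExtSet M B) := by
    rw [dual_isBase_iff']
    refine ⟨?_, fun y hy => Or.inr hy⟩
    have : (M ↾ X).E \ ExtSet M B = B \ IntSet M' B := by
      rw [restrict_ground_eq]; exact fset_diff_ext
    rw [this]
    exact baseX hP hInd
  refine minBasis_of_cocircs hbase ?_
  intro e he
  obtain ⟨C, hC, hCsub, hCmin, hCExt⟩ := extCirc hP he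
  refine ⟨C, ?_, hCExt, hCmin⟩
  have hXE : X ⊆ M.E := fset_subset_ground hInd.subset_ground
  have : Circ (M ↾ X) C := (restrict_circ_iff hXE).2 ⟨hC, hCsub.trans (insert_subset
    (Or.inr he) subset_union_left)⟩
  rwa [dual_dual]

lemma minInt (hP : Perspective M M') (hInd : M.Indep B) (hSp : M'.Spanning B) :
    MinBasis (mcon M' (B \ IntSet M' B ∪ ExtSet M B)) (IntSet M' B) := by
  set X := B \ IntSet M' B ∪ ExtSet M B with hX
  have hE := hP.1
  have hEX : M'✶.E \ X = M.E \ X := by rw [dual_ground, ← hE]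
  have hXgr : M.E \ X ⊆ M'✶.E := by rw [dual_ground, ← hE]; exact diff_subset
  have hIntX : IntSet M' B ⊆ M.E \ X := by
    rw [ground_diff_fset hInd.subset_ground]
    exact subset_union_right
  have hbase : (mcon M' X).IsBase (IntSet M' B) := by
    rw [mcon, hEX, dual_isBase_iff']
    refine ⟨?_, hIntX⟩
    have h1 : (M'✶ ↾ (M.E \ X)).E \ IntSet M' B = (M.E \ B) \ ExtSet M B := by
      rw [restrict_ground_eq, ground_diff_fset hInd.subset_ground, union_diff_right]
      rw [sdiff_eq_self_iff_disjoint.2]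
      rw [Set.disjoint_left]
      rintro y hy ⟨⟨-, hyB⟩, -⟩
      exact hyB (intSet_subset hy)
    rw [h1]
    exact baseCompl hP hInd hSp
  refine minBasis_of_cocircs hbase ?_
  intro b hb
  obtain ⟨D, hD, hDsub, hDmin, hDInt⟩ := intCocirc hP hb
  refine ⟨D, ?_, hDInt, hDmin⟩
  have h2 : Circ (M'✶ ↾ (M.E \ X)) D := by
    refine (restrict_circ_iff hXgr).2 ⟨hD, hDsub.trans ?_⟩
    refine insert_subset (hIntX hb) ?_
    rw [ground_diff_fset hInd.subset_ground]
    rintro y ⟨⟨hy1, hy2⟩, hy3⟩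
    exact Or.inl ⟨⟨hE ▸ hy1, hy2⟩, hy3⟩
  rw [mcon, hEX, dual_dual]
  exact h2

end Forward

section CompatFwd
variable [Fintype α] [LinearOrder α] {M M' : Matroid α} {B D C : Set α} {b e : α}


lemma mem_of_inter_eq {S T : Set α} {b y : α} (h : S ∩ T = {b}) (hy1 : y ∈ S)
    (hy2 : y ∈ T) : y = b := by
  have : y ∈ S ∩ T := ⟨hy1, hy2⟩
  rw [h] at this
  exact this

lemma self_mem_of_inter_eq {S T : Set α} {b : α} (h : S ∩ T = {b}) : b ∈ S ∧ b ∈ T := by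
  have : b ∈ S ∩ T := by rw [h]; rfl
  exact ⟨this.1, this.2⟩

lemma int_not_mem_fset {c : α} (hc : c ∈ IntSet M' B) :
    c ∉ (B \ IntSet M' B ∪ ExtSet M B) := by
  rintro (h | h)
  · exact h.2 hc
  · exact (extSet_subset h).2 (intSet_subset hc)

lemma compat1_direct (hP : Perspective M M') (hD : Circ (M'✶) D) (hmin : IsMinOf b D)
    (hXD : (B \ IntSet M' B ∪ ExtSet M B) ∩ D = {b}) (hemp : D ∩ IntSet M' B = ∅) :
    False := by
  obtain ⟨hbX, hbD⟩ := self_mem_of_inter_eq hXD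
  rcases hbX with hb | hb
  · -- b ∈ B \ Int : then b would be internally active
    refine hb.2 ⟨hb.1, D, hD, ?_, hmin⟩
    intro y hy
    rcases eq_or_ne y b with rfl | hyb
    · exact mem_insert _ _
    · have hyE : y ∈ M'.E := hD.subset_ground hy
      have hyX : y ∉ (B \ IntSet M' B ∪ ExtSet M B) := by
        intro hyX
        exact hyb (mem_of_inter_eq hXD hyX hy)
      have hyInt : y ∉ IntSet M' B := by
        intro h
        have : y ∈ D ∩ IntSet M' B := ⟨hy, h⟩
        rw [hemp] at this
        exact this
      refine Or.inr ⟨hyE, fun hyB => hyX (Or.inl ⟨hyB, hyInt⟩)⟩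
  · -- b ∈ Ext : direct contradiction with its fundamental circuit
    obtain ⟨C, hC, hCsub, hCmin, -⟩ := extCirc hP hb
    obtain ⟨C', hC', hC'sub, hbC'⟩ := hP.2 C hC b hCmin.1
    obtain ⟨y, ⟨hyC', hyD⟩, hyb⟩ := circ_cocirc_second hC' hD ⟨hbC', hmin.1⟩
    have hyX : y ∈ B \ IntSet M' B ∪ ExtSet M B := by
      rcases hCsub (hC'sub hyC') with rfl | hyBI
      · exact absurd rfl hyb
      · exact Or.inl hyBI
    exact hyb (mem_of_inter_eq hXD hyX hyD)

lemma compat1_aux (hP : Perspective M M') :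
    ∀ n : ℕ, ∀ D b, Circ (M'✶) D → IsMinOf b D →
      (B \ IntSet M' B ∪ ExtSet M B) ∩ D = {b} → (D ∩ IntSet M' B).ncard ≤ n → False := by
  intro n
  induction n with
  | zero =>
    intro D b hD hmin hXD hc
    exact compat1_direct hP hD hmin hXD
      ((Set.ncard_eq_zero (toFinite _)).1 (Nat.le_zero.1 hc))
  | succ n ih =>
    intro D b hD hmin hXD hc
    by_cases hemp : D ∩ IntSet M' B = ∅
    · exact compat1_direct hP hD hmin hXD hemp
    obtain ⟨c, hcD, hcI⟩ := Set.nonempty_iff_ne_empty.2 hemp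
    obtain ⟨Dc, hDc, hDcsub, hDcmin, hDcInt⟩ := intCocirc hP hcI
    obtain ⟨hbX, hbD⟩ := self_mem_of_inter_eq hXD
    have hbc : b ≠ c := fun h => int_not_mem_fset hcI (h ▸ hbX)
    have hbDc : b ∉ Dc := by
      intro h
      rcases hDcsub h with h' | h'
      · exact hbc h'
      · rcases hbX with hb | hb
        · exact h'.1.2 hb.1
        · exact h'.2 hb
    obtain ⟨D', hD', hbD', hD'sub⟩ := circ_elim hD hDc hbD hbDc hDcmin.1
    have hXD' : (B \ IntSet M' B ∪ ExtSet M B) ∩ D' = {b} := by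
      refine Set.eq_singleton_iff_unique_mem.2 ⟨⟨hbX, hbD'⟩, ?_⟩
      rintro y ⟨hyX, hyD'⟩
      obtain ⟨hy1, hy2⟩ := hD'sub hyD'
      rcases hy1 with hy | hy
      · exact mem_of_inter_eq hXD hyX hy
      · exfalso
        rcases hDcsub hy with h' | h'
        · exact hy2 h'
        · rcases hyX with h'' | h''
          · exact h'.1.2 h''.1
          · exact h'.2 h''
    have hmin' : IsMinOf b D' := by
      refine ⟨hbD', fun y hy => ?_⟩
      rcases (hD'sub hy).1 with h | h
      · exact hmin.2 y h
      · exact (hmin.2 c hcD).trans (hDcmin.2 y h)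
    have hsub : D' ∩ IntSet M' B ⊆ (D ∩ IntSet M' B) \ {c} := by
      rintro y ⟨hyD', hyI⟩
      obtain ⟨hy1, hy2⟩ := hD'sub hyD'
      rcases hy1 with h | h
      · exact ⟨⟨h, hyI⟩, hy2⟩
      · exfalso
        exact hy2 (by have : y ∈ Dc ∩ IntSet M' B := ⟨h, hyI⟩; rwa [hDcInt] at this)
    have hcard : (D' ∩ IntSet M' B).ncard ≤ n := by
      have h1 := Set.ncard_le_ncard hsub (toFinite _)
      have h2 : ((D ∩ IntSet M' B) \ {c}).ncard = (D ∩ IntSet M' B).ncard - 1 :=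
        Set.ncard_diff_singleton_of_mem ⟨hcD, hcI⟩
      have h3 : 0 < (D ∩ IntSet M' B).ncard :=
        (Set.ncard_pos (toFinite _)).2 ⟨c, hcD, hcI⟩
      omega
    exact ih D' b hD' hmin' hXD' hcard

lemma compat1 (hP : Perspective M M') (hInd : M.Indep B) :
    Compat (M'✶) (B \ IntSet M' B ∪ ExtSet M B) := by
  rintro ⟨D, b, hD, hmin, hXD⟩
  exact compat1_aux hP ((D ∩ IntSet M' B).ncard) D b hD hmin hXD le_rfl

lemma compat2_direct (hP : Perspective M M') (hInd : M.Indep B) (hC : Circ M C)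
    (hmin : IsMinOf e C)
    (hXC : (M.E \ (B \ IntSet M' B ∪ ExtSet M B)) ∩ C = {e}) (hemp : C ∩ ExtSet M B = ∅) :
    False := by
  have hE := hP.1
  obtain ⟨heX0, heC0⟩ := self_mem_of_inter_eq hXC
  have he' : e ∈ ((M.E \ B) \ ExtSet M B) ∪ IntSet M' B := by
    rw [← ground_diff_fset hInd.subset_ground]; exact heX0
  rcases he' with he | he
  · -- e ∈ (M.E \ B) \ Ext : then e would be externally active
    refine he.2 ⟨he.1, C, hC, ?_, hmin⟩
    intro y hy
    rcases eq_or_ne y e with rfl | hye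
    · exact mem_insert _ _
    · have hyX : y ∉ M.E \ (B \ IntSet M' B ∪ ExtSet M B) := by
        intro hyX
        exact hye (mem_of_inter_eq hXC hyX hy)
      have hyE : y ∈ M.E := hC.subset_ground hy
      have : y ∈ B \ IntSet M' B ∪ ExtSet M B := by
        by_contra h
        exact hyX ⟨hyE, h⟩
      rcases this with h | h
      · exact Or.inr h.1
      · exfalso
        have : y ∈ C ∩ ExtSet M B := ⟨hy, h⟩
        rw [hemp] at this
        exact this
  · -- e ∈ Int : contradiction with its fundamental cocircuit
    obtain ⟨D, hD, hDsub, hDmin, -⟩ := intCocirc hP he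
    obtain ⟨C', hC', hC'sub, heC'⟩ := hP.2 C hC e hmin.1
    obtain ⟨y, ⟨hyC', hyD⟩, hye⟩ := circ_cocirc_second hC' hD ⟨heC', hDmin.1⟩
    have hyX : y ∈ M.E \ (B \ IntSet M' B ∪ ExtSet M B) := by
      rcases hDsub hyD with rfl | hyB
      · exact absurd rfl hye
      · rw [ground_diff_fset hInd.subset_ground]
        exact Or.inl ⟨⟨hE ▸ hyB.1.1, hyB.1.2⟩, hyB.2⟩
    exact hye (mem_of_inter_eq hXC hyX (hC'sub hyC'))

lemma compat2_aux (hP : Perspective M M') (hInd : M.Indep B) :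
    ∀ n : ℕ, ∀ C e, Circ M C → IsMinOf e C →
      (M.E \ (B \ IntSet M' B ∪ ExtSet M B)) ∩ C = {e} → (C ∩ ExtSet M B).ncard ≤ n →
      False := by
  intro n
  induction n with
  | zero =>
    intro C e hC hmin hXC hc
    exact compat2_direct hP hInd hC hmin hXC
      ((Set.ncard_eq_zero (toFinite _)).1 (Nat.le_zero.1 hc))
  | succ n ih =>
    intro C e hC hmin hXC hc
    by_cases hemp : C ∩ ExtSet M B = ∅
    · exact compat2_direct hP hInd hC hmin hXC hemp
    obtain ⟨c, hcC, hcE⟩ := Set.nonempty_iff_ne_empty.2 hemp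
    obtain ⟨Cc, hCc, hCcsub, hCcmin, hCcExt⟩ := extCirc hP hcE
    obtain ⟨heX, heC⟩ := self_mem_of_inter_eq hXC
    have hec : e ≠ c := by
      rintro rfl
      exact heX.2 (Or.inr hcE)
    have heCc : e ∉ Cc := by
      intro h
      rcases hCcsub h with h' | h'
      · exact hec h'
      · exact heX.2 (Or.inl h')
    obtain ⟨C'', hC'', heC'', hC''sub⟩ := circ_elim hC hCc heC heCc hCcmin.1
    have hXC'' : (M.E \ (B \ IntSet M' B ∪ ExtSet M B)) ∩ C'' = {e} := by
      refine Set.eq_singleton_iff_unique_mem.2 ⟨⟨heX, heC''⟩, ?_⟩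
      rintro y ⟨hyX, hyC''⟩
      obtain ⟨hy1, hy2⟩ := hC''sub hyC''
      rcases hy1 with hy | hy
      · exact mem_of_inter_eq hXC hyX hy
      · exfalso
        rcases hCcsub hy with h' | h'
        · exact hy2 h'
        · exact hyX.2 (Or.inl h')
    have hmin'' : IsMinOf e C'' := by
      refine ⟨heC'', fun y hy => ?_⟩
      rcases (hC''sub hy).1 with h | h
      · exact hmin.2 y h
      · exact (hmin.2 c hcC).trans (hCcmin.2 y h)
    have hsub : C'' ∩ ExtSet M B ⊆ (C ∩ ExtSet M B) \ {c} := by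
      rintro y ⟨hyC'', hyE⟩
      obtain ⟨hy1, hy2⟩ := hC''sub hyC''
      rcases hy1 with h | h
      · exact ⟨⟨h, hyE⟩, hy2⟩
      · exact absurd (by have : y ∈ Cc ∩ ExtSet M B := ⟨h, hyE⟩; rwa [hCcExt] at this) hy2
    have hcard : (C'' ∩ ExtSet M B).ncard ≤ n := by
      have h1 := Set.ncard_le_ncard hsub (toFinite _)
      have h2 : ((C ∩ ExtSet M B) \ {c}).ncard = (C ∩ ExtSet M B).ncard - 1 :=
        Set.ncard_diff_singleton_of_mem ⟨hcC, hcE⟩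
      have h3 : 0 < (C ∩ ExtSet M B).ncard :=
        (Set.ncard_pos (toFinite _)).2 ⟨c, hcC, hcE⟩
      omega
    exact ih C'' e hC'' hmin'' hXC'' hcard

lemma compat2 (hP : Perspective M M') (hInd : M.Indep B) :
    Compat M (M.E \ (B \ IntSet M' B ∪ ExtSet M B)) := by
  rintro ⟨C, e, hC, hmin, hXC⟩
  exact compat2_aux hP hInd ((C ∩ ExtSet M B).ncard) C e hC hmin hXC le_rfl

end CompatFwd

section Surj
variable [Fintype α] [LinearOrder α] {M M' : Matroid α}

lemma surj_exists (hP : Perspective M M') {X : Set α} (hXE : X ⊆ M.E)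
    (hc1 : Compat (M'✶) X) (hc2 : Compat M (M.E \ X)) :
    ∃ B, (M.Indep B ∧ M'.Spanning B) ∧ (B \ IntSet M' B ∪ ExtSet M B) = X := by
  have hE := hP.1
  have hXE' : X ⊆ M'.E := hE ▸ hXE
  obtain ⟨A, hA⟩ := exists_minBasis ((M ↾ X)✶)
  obtain ⟨I, hI⟩ := exists_minBasis (mcon M' X)
  have hAX : A ⊆ X := by
    have := hA.1.subset_ground
    rwa [dual_ground, restrict_ground_eq] at this
  have hXA : (M ↾ X).IsBase (X \ A) := by
    have h := (dual_isBase_iff'.1 hA.1).1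
    rwa [restrict_ground_eq] at h
  have hXAind : M.Indep (X \ A) := (restrict_indep_iff.1 hXA.indep).1
  have hmconE : (mcon M' X).E = M'.E \ X := rfl
  have hIX : I ⊆ M'.E \ X := hmconE ▸ hI.1.subset_ground
  have hXI : (M'✶ ↾ (M'.E \ X)).IsBase ((M'.E \ X) \ I) := by
    have h := (dual_isBase_iff'.1 hI.1).1
    rwa [restrict_ground_eq, dual_ground] at h
  have hXIind : M'✶.Indep ((M'.E \ X) \ I) := (restrict_indep_iff.1 hXI.indep).1
  have hgr' : M'.E \ X ⊆ M'✶.E := by rw [dual_ground]; exact diff_subset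
  -- fundamental cocircuits of the two min bases
  have hAco : ∀ a ∈ A, ∃ C, Circ M C ∧ C ⊆ insert a (X \ A) ∧ IsMinOf a C := by
    intro a ha
    obtain ⟨D, hD, hDsub, hDmin⟩ := minBasis_cocircs hA ha
    rw [dual_dual] at hD
    obtain ⟨hDM, hDX⟩ := (restrict_circ_iff hXE).1 hD
    refine ⟨D, hDM, ?_, hDmin⟩
    rwa [dual_ground, restrict_ground_eq] at hDsub
  have hIco : ∀ i ∈ I, ∃ D, Circ (M'✶) D ∧ D ⊆ insert i ((M'.E \ X) \ I) ∧ IsMinOf i D := by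
    intro i hi
    obtain ⟨D, hD, hDsub, hDmin⟩ := minBasis_cocircs hI hi
    rw [show (mcon M' X)✶ = M'✶ ↾ (M'.E \ X) from dual_dual _] at hD
    obtain ⟨hDM, hDX⟩ := (restrict_circ_iff hgr').1 hD
    refine ⟨D, hDM, ?_, hDmin⟩
    rwa [hmconE] at hDsub
  set B := (X \ A) ∪ I with hB
  have hBE : B ⊆ M.E := by
    rintro y (hy | hy)
    · exact hXE hy.1
    · exact hE ▸ (hIX hy).1
  have hBE' : B ⊆ M'.E := hE ▸ hBE
  have hIB : I ⊆ B := subset_union_right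
  have hAB : ∀ a ∈ A, a ∉ B := by
    rintro a ha (h | h)
    · exact h.2 ha
    · exact (hIX h).2 (hAX ha)
  -- (s1) B is independent in M
  have hInd : M.Indep B := by
    by_contra hni
    obtain ⟨C, hC, hCB⟩ := exists_circ_of_dep ⟨hni, hBE⟩
    by_cases hCI : ∃ i, i ∈ C ∧ i ∈ I
    · obtain ⟨i, hiC, hiI⟩ := hCI
      obtain ⟨Di, hDi, hDisub, hDimin⟩ := hIco i hiI
      obtain ⟨C', hC', hC'sub, hiC'⟩ := hP.2 C hC i hiC
      obtain ⟨y, ⟨hyC', hyD⟩, hyi⟩ := circ_cocirc_second hC' hDi ⟨hiC', hDimin.1⟩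
      have hy' := (hDisub hyD).resolve_left hyi
      rcases hCB (hC'sub hyC') with h | h
      · exact hy'.1.2 h.1
      · exact hy'.2 h
    · push_neg at hCI
      refine hC.dep_s9.not_indep (hXAind.subset fun y hy => ?_)
      exact (hCB hy).resolve_right (hCI y hy)
  -- (s2) B is spanning in M'
  have hcompl : M'.E \ B = A ∪ ((M'.E \ X) \ I) := by
    ext x
    have h1 : x ∈ A → x ∈ X := fun h => hAX h
    have h2 : x ∈ I → x ∈ M'.E ∧ x ∉ X := fun h => hIX h
    have h3 : x ∈ X → x ∈ M'.E := fun h => hXE' h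
    simp only [hB, mem_union, mem_diff]
    tauto
  have hSp : M'.Spanning B := by
    rw [spanning_iff_compl_coindep hBE']
    rw [coindep_def]
    by_contra hni
    obtain ⟨D, hD, hDsub⟩ := exists_circ_of_dep ⟨hni, by rw [dual_ground]; exact diff_subset⟩
    rw [hcompl] at hDsub
    by_cases hDA : ∃ a, a ∈ D ∧ a ∈ A
    · obtain ⟨a, haD, haA⟩ := hDA
      obtain ⟨Ca, hCa, hCasub, hCamin⟩ := hAco a haA
      obtain ⟨C', hC', hC'sub, haC'⟩ := hP.2 Ca hCa a hCamin.1
      obtain ⟨y, ⟨hyC', hyD⟩, hya⟩ := circ_cocirc_second hC' hD ⟨haC', haD⟩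
      have hy' := (hCasub (hC'sub hyC')).resolve_left hya
      rcases hDsub hyD with h | h
      · exact hy'.2 h
      · exact h.1.2 hy'.1
    · push_neg at hDA
      refine hD.dep_s9.not_indep (hXIind.subset fun y hy => ?_)
      exact (hDsub hy).resolve_left (hDA y hy)
  -- (s3) ExtSet M B = A
  have hExtA : ExtSet M B = A := by
    apply subset_antisymm
    · rintro e ⟨⟨heE, heB⟩, C, hC, hCsub, hCmin⟩
      by_contra heA
      have heX : e ∉ X := fun h => heB (Or.inl ⟨h, heA⟩)
      by_cases hCI : ∃ i, i ∈ C ∧ i ∈ I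
      · obtain ⟨i, hiC, hiI⟩ := hCI
        obtain ⟨Di, hDi, hDisub, hDimin⟩ := hIco i hiI
        obtain ⟨C', hC', hC'sub, hiC'⟩ := hP.2 C hC i hiC
        obtain ⟨y, ⟨hyC', hyD⟩, hyi⟩ := circ_cocirc_second hC' hDi ⟨hiC', hDimin.1⟩
        have hy' := (hDisub hyD).resolve_left hyi
        have hye : y = e := by
          rcases hCsub (hC'sub hyC') with h | h
          · exact h
          · exfalso
            rcases h with h | h
            · exact hy'.1.2 h.1
            · exact hy'.2 h
        have h1 : e ≤ i := hCmin.2 i hiC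
        have h2 : i ≤ e := hDimin.2 e (hye ▸ hyD)
        exact heB (hIB ((le_antisymm h2 h1) ▸ hiI))
      · push_neg at hCI
        refine hc2 ⟨C, e, hC, hCmin, ?_⟩
        refine Set.eq_singleton_iff_unique_mem.2 ⟨⟨⟨heE, heX⟩, hCmin.1⟩, ?_⟩
        rintro y ⟨⟨hyE, hyX⟩, hyC⟩
        rcases hCsub hyC with h | h
        · exact h
        · exfalso
          rcases h with h | h
          · exact hyX h.1
          · exact hCI y hyC h
    · intro a ha
      obtain ⟨Ca, hCa, hCasub, hCamin⟩ := hAco a ha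
      refine ⟨⟨hXE (hAX ha), hAB a ha⟩, Ca, hCa, ?_, hCamin⟩
      exact hCasub.trans (insert_subset_insert subset_union_left)
  -- (s4) IntSet M' B = I
  have hIntI : IntSet M' B = I := by
    apply subset_antisymm
    · rintro b ⟨hbB, D, hD, hDsub, hDmin⟩
      by_contra hbI
      have hbXA : b ∈ X \ A := (hbB.elim id (fun h => absurd h hbI))
      by_cases hDA : ∃ a, a ∈ D ∧ a ∈ A
      · obtain ⟨a, haD, haA⟩ := hDA
        obtain ⟨Ca, hCa, hCasub, hCamin⟩ := hAco a haA
        obtain ⟨C', hC', hC'sub, haC'⟩ := hP.2 Ca hCa a hCamin.1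
        obtain ⟨y, ⟨hyC', hyD⟩, hya⟩ := circ_cocirc_second hC' hD ⟨haC', haD⟩
        have hy' := (hCasub (hC'sub hyC')).resolve_left hya
        have hyb : y = b := by
          rcases hDsub hyD with h | h
          · exact h
          · exact absurd (Or.inl hy') h.2
        have h1 : a ≤ b := hCamin.2 b (hyb ▸ (hC'sub hyC'))
        have h2 : b ≤ a := hDmin.2 a haD
        exact hbXA.2 ((le_antisymm h2 h1) ▸ haA)
      · push_neg at hDA
        refine hc1 ⟨D, b, hD, hDmin, ?_⟩
        refine Set.eq_singleton_iff_unique_mem.2 ⟨⟨hbXA.1, hDmin.1⟩, ?_⟩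
        rintro y ⟨hyX, hyD⟩
        rcases hDsub hyD with h | h
        · exact h
        · exfalso
          by_cases hyA : y ∈ A
          · exact hDA y hyD hyA
          · exact h.2 (Or.inl ⟨hyX, hyA⟩)
    · intro i hi
      obtain ⟨Di, hDi, hDisub, hDimin⟩ := hIco i hi
      refine ⟨hIB hi, Di, hDi, ?_, hDimin⟩
      refine hDisub.trans (insert_subset_insert ?_)
      rintro y ⟨⟨hy1, hy2⟩, hy3⟩
      refine ⟨hy1, ?_⟩
      rintro (h | h)
      · exact hy2 h.1
      · exact hy3 h
  refine ⟨B, ⟨hInd, hSp⟩, ?_⟩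
  rw [hIntI, hExtA]
  have h1 : B \ I = X \ A := by
    rw [hB, union_diff_right, sdiff_eq_self_iff_disjoint.2]
    rw [Set.disjoint_left]
    rintro y hy ⟨hy1, -⟩
    exact (hIX hy).2 hy1
  rw [h1, diff_union_of_subset hAX]

end Surj
/-- The map `f(B) = (B \ Int_{M'}(B)) ∪ Ext_M(B)` is a bijection from the sets `B`
independent in `M` and spanning in `M'` onto `D(M, M', <)`, with inverse
`g(X) = (X \ B_min((M|X)✶)) ∪ B_min(M'/X)`. -/
theorem f_bijection [Fintype α] [LinearOrder α] (M M' : Matroid α)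
    (hP : Perspective M M') :
    Set.BijOn (fun B => (B \ IntSet M' B) ∪ ExtSet M B)
      {B | M.Indep B ∧ M'.Spanning B} (DSet M M') ∧
    ∀ B ∈ {B : Set α | M.Indep B ∧ M'.Spanning B}, ∀ B' B'' : Set α,
      MinBasis ((M ↾ ((B \ IntSet M' B) ∪ ExtSet M B))✶) B' →
      MinBasis (mcon M' ((B \ IntSet M' B) ∪ ExtSet M B)) B'' →
      (((B \ IntSet M' B) ∪ ExtSet M B) \ B') ∪ B'' = B := by
  constructor
  · refine ⟨?_, ?_, ?_⟩
    · -- MapsTo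
      rintro B ⟨hInd, hSp⟩
      exact ⟨fset_subset_ground hInd.subset_ground, compat1 hP hInd, compat2 hP hInd⟩
    · -- InjOn
      rintro B₁ ⟨hInd₁, hSp₁⟩ B₂ ⟨hInd₂, hSp₂⟩ hf
      have hf' : (B₁ \ IntSet M' B₁ ∪ ExtSet M B₁) = (B₂ \ IntSet M' B₂ ∪ ExtSet M B₂) := hf
      have hExt : ExtSet M B₁ = ExtSet M B₂ := by
        have h1 := minExt hP hInd₁
        have h2 := minExt hP hInd₂
        rw [hf'] at h1
        exact minBasis_unique h1 h2
      have hInt : IntSet M' B₁ = IntSet M' B₂ := by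
        have h1 := minInt hP hInd₁ hSp₁
        have h2 := minInt hP hInd₂ hSp₂
        rw [hf'] at h1
        exact minBasis_unique h1 h2
      have e1 : ((B₁ \ IntSet M' B₁ ∪ ExtSet M B₁) \ ExtSet M B₁) ∪ IntSet M' B₁ = B₁ := by
        rw [fset_diff_ext, diff_union_of_subset intSet_subset]
      have e2 : ((B₂ \ IntSet M' B₂ ∪ ExtSet M B₂) \ ExtSet M B₂) ∪ IntSet M' B₂ = B₂ := by
        rw [fset_diff_ext, diff_union_of_subset intSet_subset]
      rw [← e1, ← e2, hf', hExt, hInt]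
    · -- SurjOn
      rintro X ⟨hXE, hc1, hc2⟩
      obtain ⟨B, hBdom, hfB⟩ := surj_exists hP hXE hc1 hc2
      exact ⟨B, hBdom, hfB⟩
  · -- the inverse formula
    rintro B ⟨hInd, hSp⟩ B' B'' h1 h2
    have hB' : B' = ExtSet M B := minBasis_unique h1 (minExt hP hInd)
    have hB'' : B'' = IntSet M' B := minBasis_unique h2 (minInt hP hInd hSp)
    rw [hB', hB'', fset_diff_ext, diff_union_of_subset intSet_subset]
end
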